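/- (Corollary 4 of the paper.) In the CBwK setting, suppose min B > 0 and there exists a null-cost action a₀ ∈ A with c(x,a₀) = 0 for all x ∈ X. Then for every b ∈ [0, (min B)/2], any minimizer λ*_{B−b·1} of λ ↦ L(λ, B−b·1) over λ ∈ [0,∞)^d satisfies ‖λ*_{B−b·1}‖ ≤ 2 ( OPT(r,c,B) − OPT(r,c,0) ) / min B, where ‖·‖ is the Euclidean norm and 0 denotes the zero vector of cost constraints. -/

import Mathlib

open MeasureTheory Finset

namespace CBwK

variable {X : Type*} [MeasurableSpace X] {A : Type*} [Fintype A] [Nonempty A] {d : ℕ}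

/-- A static policy: a measurable map `X → P(A)` with components `(π_a)_{a∈A}`. -/
def IsPolicy (π : X → A → ℝ) : Prop :=
  (∀ x a, 0 ≤ π x a) ∧ (∀ x, ∑ a, π x a = 1) ∧ (∀ a, Measurable fun x => π x a)

/-- Expected reward `E_{X∼ν}[Σ_a r(X,a) π_a(X)]` of a policy. -/
noncomputable def polReward (ν : Measure X) (r : X → A → ℝ) (π : X → A → ℝ) : ℝ :=
  ∫ x, ∑ a, r x a * π x a ∂ν

/-- Component `i` of the expected cost vector `E_{X∼ν}[Σ_a c(X,a) π_a(X)]` of a policy. -/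
noncomputable def polCost (ν : Measure X) (c : X → A → Fin d → ℝ) (π : X → A → ℝ)
    (i : Fin d) : ℝ :=
  ∫ x, ∑ a, c x a i * π x a ∂ν

/-- The problem `(r,c,B',ν)` is feasible. -/
def Feasible (ν : Measure X) (c : X → A → Fin d → ℝ) (B' : Fin d → ℝ) : Prop :=
  ∃ π, IsPolicy π ∧ ∀ i, polCost ν c π i ≤ B' i

/-- `OPT(r,c,B')`: optimal expected reward under the expected-cost constraints `B'`. -/
noncomputable def OPT (ν : Measure X) (r : X → A → ℝ) (c : X → A → Fin d → ℝ)
    (B' : Fin d → ℝ) : ℝ :=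
  sSup {y : ℝ | ∃ π, IsPolicy π ∧ (∀ i, polCost ν c π i ≤ B' i) ∧ y = polReward ν r π}

/-- `L(λ,C) = E_{X∼ν}[ max_a { r(X,a) − ⟨c(X,a) − C, λ⟩ } ]`. -/
noncomputable def L (ν : Measure X) (r : X → A → ℝ) (c : X → A → Fin d → ℝ)
    (lam : Fin d → ℝ) (C : Fin d → ℝ) : ℝ :=
  ∫ x, Finset.univ.sup' Finset.univ_nonempty
    (fun a => r x a - ∑ i, (c x a i - C i) * lam i) ∂ν

/-- Euclidean norm on `ℝ^d`. -/
noncomputable def enorm (v : Fin d → ℝ) : ℝ := Real.sqrt (∑ i, (v i) ^ 2)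

/-- ℓ1-norm on `ℝ^d`. -/
noncomputable def l1norm (v : Fin d → ℝ) : ℝ := ∑ i, |v i|

/-- Smallest component of a vector of `ℝ^d` (junk value `0` if `d = 0`). -/
noncomputable def minComp (v : Fin d → ℝ) : ℝ := ⨅ i, v i

end CBwK

/-!
Weak duality, with the null-cost action making the zero budget feasible, gives
`OPT(0) + ⟨C, λ*⟩ ≤ L(λ*, C)` for `C = B - b·1`. Conversely, the cost-reward pairs `(z, y)`
strictly dominated by some policy form an open convex set that misses `(C, OPT(C))`;
separating them by a hyperplane, with the null action as a Slater point, yields multipliers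
`λ ≥ 0` with `L(λ, C) ≤ OPT(C) ≤ OPT(B)`, because `L(λ, C)` is the Lagrangian of the policy that
plays uniformly among the maximizers of `r(x, ·) - ⟨c(x, ·) - C, λ⟩`. As `λ*` minimizes `L(·, C)`
and every component of `C` is at least `min B / 2`, this gives
`(min B / 2) ‖λ*‖₁ ≤ OPT(B) - OPT(0)`, and `‖λ*‖ ≤ ‖λ*‖₁`.
-/

namespace CBwK

lemma nonpos_of_forall_add_mul_lt {a b c : ℝ} (h : ∀ s : ℝ, 0 ≤ s → a + s * b < c) : b ≤ 0 := by
  by_contra! hb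
  have := h (|c - a| / b) (by positivity)
  rw [div_mul_cancel₀ _ hb.ne'] at this
  linarith [le_abs_self (c - a)]

lemma strongDual_prod_apply {ι : Type*} [Fintype ι] [DecidableEq ι]
    (f : StrongDual ℝ ((ι → ℝ) × ℝ)) (q : (ι → ℝ) × ℝ) :
    f q = ∑ i, q.1 i * f (Pi.single i 1, 0) + q.2 * f (0, 1) := by
  have hq : q = ContinuousLinearMap.inl ℝ (ι → ℝ) ℝ q.1 + q.2 • (0, 1) := by ext <;> simp
  have hsingle : ∀ i : ι, (fun j => if i = j then (1 : ℝ) else 0) = Pi.single i 1 := fun i => by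
    ext j
    rcases eq_or_ne i j with rfl | h <;> simp [*, Ne.symm]
  conv_lhs => rw [hq]
  rw [map_add, map_smul, smul_eq_mul, ← ContinuousLinearMap.comp_apply,
    ← ContinuousLinearMap.coe_coe, LinearMap.pi_apply_eq_sum_univ]
  simp [hsingle]

theorem exists_nonneg_multipliers_of_isOpen_convex {ι : Type*} [Fintype ι]
    {S : Set ((ι → ℝ) × ℝ)} (hS_open : IsOpen S) (hS_conv : Convex ℝ S)
    (hS_mono : ∀ p ∈ S, ∀ q : (ι → ℝ) × ℝ, p.1 ≤ q.1 → q.2 ≤ p.2 → q ∈ S)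
    {z : ι → ℝ} {y : ℝ} (hzy : (z, y) ∉ S) {p₀ : (ι → ℝ) × ℝ} (hp₀ : p₀ ∈ S)
    (hp₀z : ∀ i, p₀.1 i < z i) :
    ∃ lam : ι → ℝ, (∀ i, 0 ≤ lam i) ∧ ∀ p ∈ S, p.2 - ∑ i, (p.1 i - z i) * lam i < y := by
  classical
  obtain ⟨f, hf⟩ := geometric_hahn_banach_open_point hS_conv hS_open hzy
  set μ : ι → ℝ := fun i => f (Pi.single i 1, 0)
  set κ := f (0, 1)
  have hf_apply : ∀ q, f q = ∑ i, q.1 i * μ i + q.2 * κ := strongDual_prod_apply f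
  -- `S` is unbounded in the directions `(Pi.single i 1, 0)` and `(0, -1)`, on which `f` is
  -- therefore nonpositive
  have hμ : ∀ i, μ i ≤ 0 := fun i => nonpos_of_forall_add_mul_lt fun s hs => by
    have hmem : p₀ + s • (Pi.single i 1, 0) ∈ S := hS_mono _ hp₀ _
      (le_add_of_nonneg_right (smul_nonneg hs (Pi.single_nonneg.2 zero_le_one))) (by simp)
    simpa only [map_add, map_smul, smul_eq_mul] using hf _ hmem
  have hκ : 0 ≤ κ := neg_nonpos.1 <| nonpos_of_forall_add_mul_lt fun s hs => by
    have hmem : p₀ + s • -((0, 1) : (ι → ℝ) × ℝ) ∈ S := hS_mono _ hp₀ _ (by simp)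
      (by simp [hs])
    simpa only [map_add, map_smul, smul_eq_mul, map_neg] using hf _ hmem
  -- the Slater point `p₀` rules out a vertical separating hyperplane
  have hκ_pos : 0 < κ := by
    refine hκ.lt_of_ne fun hκ0 => ?_
    have h := hf p₀ hp₀
    rw [hf_apply, hf_apply, ← hκ0] at h
    have : ∑ i, z i * μ i ≤ ∑ i, p₀.1 i * μ i :=
      sum_le_sum fun i _ => mul_le_mul_of_nonpos_right (hp₀z i).le (hμ i)
    simp only [mul_zero, add_zero] at h
    linarith
  refine ⟨fun i => -μ i / κ, fun i => div_nonneg (neg_nonneg.2 (hμ i)) hκ_pos.le,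
    fun p hp => ?_⟩
  have h := hf p hp
  rw [hf_apply, hf_apply] at h
  have key : (p.2 - ∑ i, (p.1 i - z i) * (-μ i / κ)) * κ
      = ∑ i, p.1 i * μ i + p.2 * κ - ∑ i, z i * μ i := by
    simp only [sub_mul, sum_mul, mul_div_assoc', div_mul_cancel₀ _ hκ_pos.ne', sum_sub_distrib,
      mul_neg, sum_neg_distrib]
    ring
  exact lt_of_mul_lt_mul_right (by linarith) hκ_pos.le

lemma combo_lt_combo {a b p q θ₁ θ₂ : ℝ} (ha : a < p) (hb : b < q) (hθ₁ : 0 ≤ θ₁)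
    (hθ₂ : 0 ≤ θ₂) (hθ : θ₁ + θ₂ = 1) : θ₁ * a + θ₂ * b < θ₁ * p + θ₂ * q := by
  rcases hθ₁.eq_or_lt with rfl | hθ₁
  · rw [zero_add] at hθ
    simpa [hθ] using hb
  · nlinarith [mul_lt_mul_of_pos_left ha hθ₁, mul_le_mul_of_nonneg_left hb.le hθ₂]

lemma enorm_le_sum_of_nonneg {d : ℕ} {v : Fin d → ℝ} (hv : ∀ i, 0 ≤ v i) :
    enorm v ≤ ∑ i, v i :=
  Real.sqrt_le_iff.2 ⟨sum_nonneg fun i _ => hv i, sum_sq_le_sq_sum_of_nonneg fun i _ => hv i⟩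

lemma integrable_of_mem_Icc {X : Type*} [MeasurableSpace X] {μ : Measure X} [IsFiniteMeasure μ]
    {f : X → ℝ} (hf : Measurable f) {a b : ℝ} (hab : ∀ x, f x ∈ Set.Icc a b) :
    Integrable f μ :=
  .of_bound hf.aestronglyMeasurable (max |a| |b|) <| .of_forall fun x =>
    abs_le_max_abs_abs (hab x).1 (hab x).2

section Argmax

variable {A : Type*} [Fintype A] [Nonempty A]

lemma sum_mul_le_sup' (ψ p : A → ℝ) (hp₀ : ∀ a, 0 ≤ p a) (hp₁ : ∑ a, p a = 1) :
    ∑ a, ψ a * p a ≤ univ.sup' univ_nonempty ψ :=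
  calc ∑ a, ψ a * p a ≤ ∑ a, univ.sup' univ_nonempty ψ * p a :=
        sum_le_sum fun a _ => mul_le_mul_of_nonneg_right (le_sup' ψ (mem_univ a)) (hp₀ a)
    _ = univ.sup' univ_nonempty ψ := by rw [← mul_sum, hp₁, mul_one]

noncomputable def argmaxFinset (ψ : A → ℝ) : Finset A := {a | ψ a = univ.sup' univ_nonempty ψ}

lemma argmaxFinset_nonempty (ψ : A → ℝ) : (argmaxFinset ψ).Nonempty := by
  obtain ⟨a, -, ha⟩ := exists_mem_eq_sup' univ_nonempty ψ
  exact ⟨a, by simp [argmaxFinset, ha]⟩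

lemma card_argmaxFinset_ne_zero (ψ : A → ℝ) : (#(argmaxFinset ψ) : ℝ) ≠ 0 := by
  simpa using (argmaxFinset_nonempty ψ).ne_empty

-- Spreading the mass over all maximizers makes the greedy policy measurable without a
-- tie-breaking rule.
noncomputable def uniformArgmax (ψ : A → ℝ) (a : A) : ℝ :=
  (if ψ a = univ.sup' univ_nonempty ψ then 1 else 0) / #(argmaxFinset ψ)

lemma uniformArgmax_nonneg (ψ : A → ℝ) (a : A) : 0 ≤ uniformArgmax ψ a :=
  div_nonneg (by split_ifs <;> norm_num) (Nat.cast_nonneg _)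

lemma sum_mul_uniformArgmax (g ψ : A → ℝ) :
    ∑ a, g a * uniformArgmax ψ a = (∑ a ∈ argmaxFinset ψ, g a) / #(argmaxFinset ψ) := by
  simp [uniformArgmax, argmaxFinset, sum_filter, sum_div, mul_div_assoc']

lemma sum_uniformArgmax (ψ : A → ℝ) : ∑ a, uniformArgmax ψ a = 1 := by
  simpa [div_self (card_argmaxFinset_ne_zero ψ)] using sum_mul_uniformArgmax 1 ψ

lemma sum_mul_uniformArgmax_self (ψ : A → ℝ) :
    ∑ a, ψ a * uniformArgmax ψ a = univ.sup' univ_nonempty ψ := by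
  have hmax : ∀ a ∈ argmaxFinset ψ, ψ a = univ.sup' univ_nonempty ψ :=
    fun a ha => (mem_filter.1 ha).2
  rw [sum_mul_uniformArgmax, sum_congr rfl hmax, sum_const, nsmul_eq_mul,
    mul_div_cancel_left₀ _ (card_argmaxFinset_ne_zero ψ)]

variable {X : Type*} [MeasurableSpace X]

lemma measurable_uniformArgmax {φ : X → A → ℝ} (hφ : ∀ a, Measurable fun x => φ x a)
    (a : A) : Measurable fun x => uniformArgmax (φ x) a := by
  have hsup : Measurable fun x => univ.sup' univ_nonempty (φ x) := by
    convert measurable_sup' univ_nonempty (f := fun a x => φ x a) fun a _ => hφ a using 1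
    ext x
    rw [Finset.sup'_apply]
  have hmax : ∀ a', MeasurableSet {x | φ x a' = univ.sup' univ_nonempty (φ x)} :=
    fun a' => measurableSet_eq_fun (hφ a') hsup
  have hcard : Measurable fun x => (#(argmaxFinset (φ x)) : ℝ) := by
    simp only [argmaxFinset, natCast_card_filter]
    exact measurable_sum _ fun a' _ => Measurable.ite (hmax a') measurable_const measurable_const
  exact (Measurable.ite (hmax a) measurable_const measurable_const).div hcard

lemma integrable_sup' {ν : Measure X} {φ : X → A → ℝ}
    (hφ : ∀ a, Integrable (fun x => φ x a) ν) :
    Integrable (fun x => univ.sup' univ_nonempty (φ x)) ν := by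
  convert sup'_induction univ_nonempty (fun a x => φ x a) (p := (Integrable · ν))
    (fun _ hf _ hg => hf.sup hg) fun a _ => hφ a using 1
  ext x
  rw [Finset.sup'_apply]

end Argmax

section Policy

variable {X : Type*} [MeasurableSpace X] {ν : Measure X} {A : Type*} [Fintype A]
  {π π₁ π₂ : X → A → ℝ}

lemma IsPolicy.le_one (hπ : IsPolicy π) (x : X) (a : A) : π x a ≤ 1 :=
  hπ.2.1 x ▸ single_le_sum (fun a _ => hπ.1 x a) (mem_univ a)

lemma IsPolicy.mix (h₁ : IsPolicy π₁) (h₂ : IsPolicy π₂) {θ₁ θ₂ : ℝ} (hθ₁ : 0 ≤ θ₁)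
    (hθ₂ : 0 ≤ θ₂) (hθ : θ₁ + θ₂ = 1) :
    IsPolicy fun x a => θ₁ * π₁ x a + θ₂ * π₂ x a := by
  refine ⟨fun x a => by have := h₁.1 x a; have := h₂.1 x a; positivity, fun x => ?_,
    fun a => ((h₁.2.2 a).const_mul θ₁).add ((h₂.2.2 a).const_mul θ₂)⟩
  rw [sum_add_distrib, ← mul_sum, ← mul_sum, h₁.2.1 x, h₂.2.1 x, mul_one, mul_one, hθ]

lemma isPolicy_uniformArgmax [Nonempty A] {φ : X → A → ℝ}
    (hφ : ∀ a, Measurable fun x => φ x a) : IsPolicy fun x => uniformArgmax (φ x) :=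
  ⟨fun x => uniformArgmax_nonneg (φ x), fun x => sum_uniformArgmax (φ x),
    measurable_uniformArgmax hφ⟩

def purePolicy [DecidableEq A] (a₀ : A) : X → A → ℝ := fun _ a => if a = a₀ then 1 else 0

lemma isPolicy_purePolicy [DecidableEq A] (a₀ : A) : IsPolicy (purePolicy (X := X) a₀) :=
  ⟨fun _ a => by unfold purePolicy; split_ifs <;> norm_num, fun _ => by simp [purePolicy],
    fun _ => measurable_const⟩

lemma IsPolicy.integrable_sum_mul (hπ : IsPolicy π) {g : X → A → ℝ}
    (hg : ∀ a, Integrable (fun x => g x a) ν) :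
    Integrable (fun x => ∑ a, g x a * π x a) ν :=
  integrable_finsetSum _ fun a _ => (hg a).mul_bdd (hπ.2.2 a).aestronglyMeasurable
    (.of_forall fun x => by rw [Real.norm_of_nonneg (hπ.1 x a)]; exact hπ.le_one x a)

lemma integral_sum_mul_mix (h₁ : IsPolicy π₁) (h₂ : IsPolicy π₂) {g : X → A → ℝ}
    (hg : ∀ a, Integrable (fun x => g x a) ν) (θ₁ θ₂ : ℝ) :
    ∫ x, ∑ a, g x a * (θ₁ * π₁ x a + θ₂ * π₂ x a) ∂ν
      = θ₁ * ∫ x, ∑ a, g x a * π₁ x a ∂ν + θ₂ * ∫ x, ∑ a, g x a * π₂ x a ∂ν := by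
  have hsplit : ∀ x, ∑ a, g x a * (θ₁ * π₁ x a + θ₂ * π₂ x a)
      = θ₁ * ∑ a, g x a * π₁ x a + θ₂ * ∑ a, g x a * π₂ x a := fun x => by
    simp only [mul_sum, ← sum_add_distrib]
    exact sum_congr rfl fun a _ => by ring
  simp only [hsplit]
  rw [integral_add ((h₁.integrable_sum_mul hg).const_mul θ₁)
    ((h₂.integrable_sum_mul hg).const_mul θ₂), integral_const_mul, integral_const_mul]

end Policy

section Payoff

variable {X : Type*} [MeasurableSpace X] {ν : Measure X} {A : Type*} {d : ℕ}
  {r : X → A → ℝ} {c : X → A → Fin d → ℝ}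

def lagrangePayoff (r : X → A → ℝ) (c : X → A → Fin d → ℝ) (lam C : Fin d → ℝ) (x : X)
    (a : A) : ℝ :=
  r x a - ∑ i, (c x a i - C i) * lam i

lemma integrable_lagrangePayoff [IsFiniteMeasure ν] (hri : ∀ a, Integrable (fun x => r x a) ν)
    (hci : ∀ a i, Integrable (fun x => c x a i) ν) (lam C : Fin d → ℝ) (a : A) :
    Integrable (fun x => lagrangePayoff r c lam C x a) ν :=
  (hri a).sub <| integrable_finsetSum _ fun i _ =>
    ((hci a i).sub (integrable_const (C i))).mul_const (lam i)

lemma measurable_lagrangePayoff (hrm : ∀ a, Measurable fun x => r x a)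
    (hcm : ∀ a i, Measurable fun x => c x a i) (lam C : Fin d → ℝ) (a : A) :
    Measurable fun x => lagrangePayoff r c lam C x a :=
  (hrm a).sub <| measurable_sum _ fun i _ => ((hcm a i).sub measurable_const).mul_const (lam i)

end Payoff

section Lagrangian

variable {X : Type*} [MeasurableSpace X] {ν : Measure X} {A : Type*} [Fintype A] {d : ℕ}
  {r : X → A → ℝ} {c : X → A → Fin d → ℝ} {π π₁ π₂ : X → A → ℝ}

lemma polReward_mix (hri : ∀ a, Integrable (fun x => r x a) ν) (h₁ : IsPolicy π₁)
    (h₂ : IsPolicy π₂) (θ₁ θ₂ : ℝ) :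
    polReward ν r (fun x a => θ₁ * π₁ x a + θ₂ * π₂ x a)
      = θ₁ * polReward ν r π₁ + θ₂ * polReward ν r π₂ :=
  integral_sum_mul_mix h₁ h₂ hri θ₁ θ₂

lemma polCost_mix (hci : ∀ a i, Integrable (fun x => c x a i) ν) (h₁ : IsPolicy π₁)
    (h₂ : IsPolicy π₂) (θ₁ θ₂ : ℝ) (i : Fin d) :
    polCost ν c (fun x a => θ₁ * π₁ x a + θ₂ * π₂ x a) i
      = θ₁ * polCost ν c π₁ i + θ₂ * polCost ν c π₂ i :=
  integral_sum_mul_mix h₁ h₂ (fun a => hci a i) θ₁ θ₂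

lemma polCost_purePolicy [DecidableEq A] (a₀ : A) (i : Fin d) :
    polCost ν c (purePolicy a₀) i = ∫ x, c x a₀ i ∂ν := by
  simp [polCost, purePolicy]

lemma polReward_le_one [IsProbabilityMeasure ν] (hri : ∀ a, Integrable (fun x => r x a) ν)
    (hr₁ : ∀ x a, r x a ≤ 1) (hπ : IsPolicy π) : polReward ν r π ≤ 1 :=
  calc polReward ν r π ≤ ∫ _, (1 : ℝ) ∂ν :=
        integral_mono (hπ.integrable_sum_mul hri) (integrable_const 1) fun x =>
          (sum_le_sum fun a _ => mul_le_of_le_one_left (hπ.1 x a) (hr₁ x a)).trans_eq (hπ.2.1 x)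
    _ = 1 := by simp

lemma le_OPT [IsProbabilityMeasure ν] (hri : ∀ a, Integrable (fun x => r x a) ν)
    (hr₁ : ∀ x a, r x a ≤ 1) {B' : Fin d → ℝ} (hπ : IsPolicy π)
    (hπB' : ∀ i, polCost ν c π i ≤ B' i) : polReward ν r π ≤ OPT ν r c B' :=
  le_csSup ⟨1, by rintro _ ⟨π', hπ', -, rfl⟩; exact polReward_le_one hri hr₁ hπ'⟩
    ⟨π, hπ, hπB', rfl⟩

lemma OPT_mono [IsProbabilityMeasure ν] (hri : ∀ a, Integrable (fun x => r x a) ν)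
    (hr₁ : ∀ x a, r x a ≤ 1) {C B : Fin d → ℝ} (hC : Feasible ν c C) (hCB : ∀ i, C i ≤ B i) :
    OPT ν r c C ≤ OPT ν r c B := by
  obtain ⟨π₀, hπ₀, hπ₀C⟩ := hC
  refine csSup_le ⟨_, π₀, hπ₀, hπ₀C, rfl⟩ ?_
  rintro _ ⟨π, hπ, hπC, rfl⟩
  exact le_OPT hri hr₁ hπ fun i => (hπC i).trans (hCB i)

noncomputable def polLagrangian (ν : Measure X) (r : X → A → ℝ) (c : X → A → Fin d → ℝ)
    (π : X → A → ℝ) (lam C : Fin d → ℝ) : ℝ :=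
  polReward ν r π - ∑ i, (polCost ν c π i - C i) * lam i

lemma integral_sum_lagrangePayoff_mul [IsProbabilityMeasure ν]
    (hri : ∀ a, Integrable (fun x => r x a) ν) (hci : ∀ a i, Integrable (fun x => c x a i) ν)
    (hπ : IsPolicy π) (lam C : Fin d → ℝ) :
    ∫ x, ∑ a, lagrangePayoff r c lam C x a * π x a ∂ν = polLagrangian ν r c π lam C := by
  have hpt : ∀ x, ∑ a, lagrangePayoff r c lam C x a * π x a
      = ∑ a, r x a * π x a - ∑ i, (∑ a, c x a i * π x a - C i) * lam i := fun x => by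
    have hC : ∀ i, C i = ∑ a, C i * π x a := fun i => by rw [← mul_sum, hπ.2.1 x, mul_one]
    conv_rhs => rw [funext hC]
    simp only [lagrangePayoff, sub_mul, sum_sub_distrib, sum_mul]
    rw [sum_comm (f := fun a i => c x a i * lam i * π x a),
      sum_comm (f := fun a i => C i * lam i * π x a)]
    congr 2 <;> exact sum_congr rfl fun _ _ => sum_congr rfl fun _ _ => by ring
  have hcost : ∀ i, Integrable (fun x => (∑ a, c x a i * π x a - C i) * lam i) ν := fun i =>
    ((hπ.integrable_sum_mul fun a => hci a i).sub (integrable_const _)).mul_const _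
  simp only [hpt]
  rw [integral_sub (hπ.integrable_sum_mul hri) (integrable_finsetSum _ fun i _ => hcost i),
    integral_finsetSum _ fun i _ => hcost i]
  simp only [integral_mul_const, integral_sub (hπ.integrable_sum_mul fun a => hci a _)
    (integrable_const _), integral_const, probReal_univ, one_smul]
  rfl

end Lagrangian

section WeakDuality

variable {X : Type*} [MeasurableSpace X] {ν : Measure X} [IsProbabilityMeasure ν]
  {A : Type*} [Fintype A] [Nonempty A] {d : ℕ} {r : X → A → ℝ} {c : X → A → Fin d → ℝ}
  {π : X → A → ℝ}

lemma polLagrangian_le_L (hri : ∀ a, Integrable (fun x => r x a) ν)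
    (hci : ∀ a i, Integrable (fun x => c x a i) ν) (hπ : IsPolicy π) (lam C : Fin d → ℝ) :
    polLagrangian ν r c π lam C ≤ L ν r c lam C := by
  rw [← integral_sum_lagrangePayoff_mul hri hci hπ]
  exact integral_mono (hπ.integrable_sum_mul (integrable_lagrangePayoff hri hci lam C))
    (integrable_sup' (integrable_lagrangePayoff hri hci lam C))
    fun x => sum_mul_le_sup' _ _ (hπ.1 x) (hπ.2.1 x)

lemma exists_polLagrangian_eq_L (hri : ∀ a, Integrable (fun x => r x a) ν)
    (hci : ∀ a i, Integrable (fun x => c x a i) ν) (hrm : ∀ a, Measurable fun x => r x a)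
    (hcm : ∀ a i, Measurable fun x => c x a i) (lam C : Fin d → ℝ) :
    ∃ π, IsPolicy π ∧ polLagrangian ν r c π lam C = L ν r c lam C := by
  have hπ := isPolicy_uniformArgmax (measurable_lagrangePayoff hrm hcm lam C)
  refine ⟨_, hπ, ?_⟩
  rw [← integral_sum_lagrangePayoff_mul hri hci hπ]
  simp only [sum_mul_uniformArgmax_self]
  rfl

lemma OPT_add_le_L (hri : ∀ a, Integrable (fun x => r x a) ν)
    (hci : ∀ a i, Integrable (fun x => c x a i) ν) {B' lam : Fin d → ℝ} (hB' : Feasible ν c B')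
    (hlam : ∀ i, 0 ≤ lam i) (C : Fin d → ℝ) :
    OPT ν r c B' + ∑ i, (C i - B' i) * lam i ≤ L ν r c lam C := by
  obtain ⟨π₀, hπ₀, hπ₀B'⟩ := hB'
  rw [← le_sub_iff_add_le]
  refine csSup_le ⟨_, π₀, hπ₀, hπ₀B', rfl⟩ ?_
  rintro _ ⟨π, hπ, hπB', rfl⟩
  have hcost : ∑ i, (polCost ν c π i - C i) * lam i ≤ ∑ i, (B' i - C i) * lam i :=
    sum_le_sum fun i _ => mul_le_mul_of_nonneg_right (by linarith [hπB' i]) (hlam i)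
  have := polLagrangian_le_L hri hci hπ lam C
  simp only [polLagrangian, sub_mul, sum_sub_distrib] at this hcost ⊢
  linarith

end WeakDuality

section StrongDuality

variable {X : Type*} [MeasurableSpace X] {ν : Measure X} {A : Type*} [Fintype A] {d : ℕ}
  {r : X → A → ℝ} {c : X → A → Fin d → ℝ}

def dominatedPairs (ν : Measure X) (r : X → A → ℝ) (c : X → A → Fin d → ℝ) :
    Set ((Fin d → ℝ) × ℝ) :=
  {p | ∃ π, IsPolicy π ∧ (∀ i, polCost ν c π i < p.1 i) ∧ p.2 < polReward ν r π}

lemma isOpen_dominatedPairs : IsOpen (dominatedPairs ν r c) := by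
  have : dominatedPairs ν r c = ⋃ π ∈ {π | IsPolicy π},
      (⋂ i, {p | polCost ν c π i < p.1 i}) ∩ {p | p.2 < polReward ν r π} := by
    ext p
    simp only [dominatedPairs, Set.mem_ofPred_eq, Set.mem_iUnion, Set.mem_inter_iff,
      Set.mem_iInter, exists_prop]
  rw [this]
  refine isOpen_biUnion fun π _ => (isOpen_iInter_of_finite fun i => ?_).inter ?_
  · exact isOpen_lt continuous_const ((continuous_apply i).comp continuous_fst)
  · exact isOpen_lt continuous_snd continuous_const

lemma convex_dominatedPairs (hri : ∀ a, Integrable (fun x => r x a) ν)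
    (hci : ∀ a i, Integrable (fun x => c x a i) ν) : Convex ℝ (dominatedPairs ν r c) := by
  rintro p ⟨π₁, h₁, hc₁, hr₁⟩ q ⟨π₂, h₂, hc₂, hr₂⟩ θ₁ θ₂ hθ₁ hθ₂ hθ
  refine ⟨_, h₁.mix h₂ hθ₁ hθ₂ hθ, fun i => ?_, ?_⟩
  · rw [polCost_mix hci h₁ h₂]
    exact combo_lt_combo (hc₁ i) (hc₂ i) hθ₁ hθ₂ hθ
  · rw [polReward_mix hri h₁ h₂]
    exact combo_lt_combo hr₁ hr₂ hθ₁ hθ₂ hθ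

lemma mem_dominatedPairs_of_le {p q : (Fin d → ℝ) × ℝ} (hp : p ∈ dominatedPairs ν r c)
    (h₁ : p.1 ≤ q.1) (h₂ : q.2 ≤ p.2) : q ∈ dominatedPairs ν r c := by
  obtain ⟨π, hπ, hcost, hrew⟩ := hp
  exact ⟨π, hπ, fun i => (hcost i).trans_le (h₁ i), h₂.trans_lt hrew⟩

lemma mk_OPT_notMem_dominatedPairs [IsProbabilityMeasure ν]
    (hri : ∀ a, Integrable (fun x => r x a) ν) (hr₁ : ∀ x a, r x a ≤ 1) (C : Fin d → ℝ) :
    (C, OPT ν r c C) ∉ dominatedPairs ν r c := fun ⟨_, hπ, hcost, hrew⟩ =>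
  (le_OPT hri hr₁ hπ fun i => (hcost i).le).not_gt hrew

theorem exists_L_le_OPT [IsProbabilityMeasure ν] [Nonempty A]
    (hri : ∀ a, Integrable (fun x => r x a) ν) (hci : ∀ a i, Integrable (fun x => c x a i) ν)
    (hrm : ∀ a, Measurable fun x => r x a) (hcm : ∀ a i, Measurable fun x => c x a i)
    (hr₁ : ∀ x a, r x a ≤ 1) {C : Fin d → ℝ}
    (hslater : ∃ π, IsPolicy π ∧ ∀ i, polCost ν c π i < C i) :
    ∃ lam, (∀ i, 0 ≤ lam i) ∧ L ν r c lam C ≤ OPT ν r c C := by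
  obtain ⟨π₀, hπ₀, hπ₀C⟩ := hslater
  obtain ⟨lam, hlam, hsep⟩ := exists_nonneg_multipliers_of_isOpen_convex isOpen_dominatedPairs
    (convex_dominatedPairs hri hci) (fun p hp q => mem_dominatedPairs_of_le hp)
    (mk_OPT_notMem_dominatedPairs hri hr₁ C)
    (p₀ := (fun i => (polCost ν c π₀ i + C i) / 2, polReward ν r π₀ - 1))
    ⟨π₀, hπ₀, fun i => by linarith [hπ₀C i], by linarith⟩ fun i => by linarith [hπ₀C i]
  refine ⟨lam, hlam, ?_⟩
  obtain ⟨π, hπ, hπL⟩ := exists_polLagrangian_eq_L hri hci hrm hcm lam C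
  rw [← hπL]
  -- `(cost π, reward π)` is a limit of dominated pairs `(cost π + t, reward π - t)`, `t → 0⁺`
  have hk : 0 < 1 + ∑ i, lam i := by linarith [sum_nonneg fun i (_ : i ∈ univ) => hlam i]
  refine le_of_forall_pos_lt_add fun ε hε => ?_
  have ht : 0 < ε / (1 + ∑ i, lam i) := div_pos hε hk
  have := hsep (fun i => polCost ν c π i + ε / (1 + ∑ i, lam i),
      polReward ν r π - ε / (1 + ∑ i, lam i))
    ⟨π, hπ, fun i => lt_add_of_pos_right _ ht, sub_lt_self _ ht⟩
  have hε_eq : ε / (1 + ∑ i, lam i) * (1 + ∑ i, lam i) = ε := div_mul_cancel₀ _ hk.ne'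
  simp only [add_sub_right_comm, add_mul, sum_add_distrib, ← mul_sum] at this
  unfold polLagrangian
  linarith

theorem dual_norm_bound_null_action_general
    {X : Type*} [MeasurableSpace X] (ν : Measure X) [IsProbabilityMeasure ν]
    {A : Type*} [Fintype A] [Nonempty A] {d : ℕ}
    (r : X → A → ℝ) (c : X → A → Fin d → ℝ) (B : Fin d → ℝ) (b : ℝ)
    (hr : ∀ x a, r x a ∈ Set.Icc (0 : ℝ) 1)
    (hc : ∀ x a i, c x a i ∈ Set.Icc (-1 : ℝ) 1)
    (hrm : ∀ a, Measurable fun x => r x a)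
    (hcm : ∀ a i, Measurable fun x => c x a i)
    (hBpos : 0 < minComp B)
    (a₀ : A) (hnull : ∀ x i, c x a₀ i = 0)
    (hb0 : 0 ≤ b) (hb : b ≤ minComp B / 2)
    (lamstar : Fin d → ℝ) (hls0 : ∀ i, 0 ≤ lamstar i)
    (hmin : ∀ lam : Fin d → ℝ, (∀ i, 0 ≤ lam i) →
      L ν r c lamstar (fun i => B i - b) ≤ L ν r c lam (fun i => B i - b)) :
    enorm lamstar ≤
      2 * (OPT ν r c B - OPT ν r c (fun _ => 0)) / minComp B := by
  classical
  set C : Fin d → ℝ := fun i => B i - b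
  have hC : ∀ i, minComp B / 2 ≤ C i := fun i => by
    linarith [show minComp B ≤ B i from ciInf_le (Set.finite_range B).bddBelow i]
  have hri i := integrable_of_mem_Icc (μ := ν) (hrm i) fun x => hr x i
  have hci a i := integrable_of_mem_Icc (μ := ν) (hcm a i) fun x => hc x a i
  have hr₁ x a : r x a ≤ 1 := (hr x a).2
  have hnull_cost i : polCost ν c (purePolicy a₀) i = 0 := by simp [polCost_purePolicy, hnull]
  have hslater i : polCost ν c (purePolicy a₀) i < C i := by linarith [hnull_cost i, hC i]
  obtain ⟨lam, hlam, hL⟩ := exists_L_le_OPT hri hci hrm hcm hr₁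
    ⟨_, isPolicy_purePolicy a₀, hslater⟩
  have hupper : L ν r c lamstar C ≤ OPT ν r c B :=
    (hmin lam hlam).trans <| hL.trans <| OPT_mono hri hr₁
      ⟨_, isPolicy_purePolicy a₀, fun i => (hslater i).le⟩ fun i => sub_le_self _ hb0
  have hlower : OPT ν r c (fun _ => 0) + ∑ i, C i * lamstar i ≤ L ν r c lamstar C := by
    simpa using OPT_add_le_L hri hci ⟨_, isPolicy_purePolicy a₀, fun i => (hnull_cost i).le⟩
      hls0 C
  have hl1 : minComp B / 2 * ∑ i, lamstar i ≤ ∑ i, C i * lamstar i := by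
    rw [mul_sum]
    exact sum_le_sum fun i _ => mul_le_mul_of_nonneg_right (hC i) (hls0 i)
  rw [le_div_iff₀ hBpos]
  nlinarith [enorm_le_sum_of_nonneg hls0]

/-- Corollary 4 of the paper: when there exists a null-cost action and `min B > 0`,
for every `b ∈ [0, (min B)/2]`, any minimizer `λ*_{B−b·1}` of `λ ↦ L(λ, B−b·1)` over
`λ ≥ 0` satisfies `‖λ*_{B−b·1}‖ ≤ 2 (OPT(r,c,B) − OPT(r,c,0)) / min B`. -/
theorem dual_norm_bound_null_action
    {X : Type*} [MeasurableSpace X] (ν : Measure X) [IsProbabilityMeasure ν]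
    {A : Type*} [Fintype A] [Nonempty A] {d : ℕ} (hd : 0 < d)
    (r : X → A → ℝ) (c : X → A → Fin d → ℝ) (B : Fin d → ℝ) (b : ℝ)
    (hr : ∀ x a, r x a ∈ Set.Icc (0 : ℝ) 1)
    (hc : ∀ x a i, c x a i ∈ Set.Icc (-1 : ℝ) 1)
    (hrm : ∀ a, Measurable fun x => r x a)
    (hcm : ∀ a i, Measurable fun x => c x a i)
    (hBpos : 0 < minComp B)
    (a₀ : A) (hnull : ∀ x i, c x a₀ i = 0)
    (hb0 : 0 ≤ b) (hb : b ≤ minComp B / 2)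
    (lamstar : Fin d → ℝ) (hls0 : ∀ i, 0 ≤ lamstar i)
    (hmin : ∀ lam : Fin d → ℝ, (∀ i, 0 ≤ lam i) →
      L ν r c lamstar (fun i => B i - b) ≤ L ν r c lam (fun i => B i - b)) :
    enorm lamstar ≤
      2 * (OPT ν r c B - OPT ν r c (fun _ => 0)) / minComp B :=
  dual_norm_bound_null_action_general ν r c B b hr hc hrm hcm hBpos a₀ hnull hb0 hb lamstar hls0
    hmin

end StrongDuality

end CBwK
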